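/- Let A and B be closed sets, w ∈ A ∩ B, δ > 0, ε₁, ε₂ ∈ [0,1/4). Assume A is (ε₁,2δ)-regular at w and B is (ε₂,3δ)-regular at w. Then the Douglas–Rachford operator T is (A∩B, γ)-quasi firmly nonexpansive on B_δ(w) with γ = (1+(1+2ε₁)²(1+2ε₂)²)/2; that is, for all x ∈ B_δ(w), x₊ ∈ T(x), and x̄ ∈ P_{A∩B}(x): ‖x − x₊‖² + ‖x₊ − x̄‖² ≤ γ‖x − x̄‖². -/

import Mathlib

open Metric Filter
open scoped Topology

variable {X : Type*} [NormedAddCommGroup X] [InnerProductSpace ℝ X] [FiniteDimensional ℝ X]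

/-- Set-valued metric projection onto `C`. -/
def projSet (C : Set X) (x : X) : Set X := {a | a ∈ C ∧ ∀ c ∈ C, ‖x - a‖ ≤ ‖x - c‖}

/-- Set-valued reflector `R_C = 2 P_C - Id`. -/
def reflSet (C : Set X) (x : X) : Set X := {z | ∃ a ∈ projSet C x, z = (2:ℝ) • a - x}

/-- Set-valued Douglas–Rachford operator `T(x) = {P_B(2a-x)+x-a : a ∈ P_A x}`. -/
def DRop (A B : Set X) (x : X) : Set X :=
  {y | ∃ a ∈ projSet A x, ∃ b ∈ projSet B ((2:ℝ) • a - x), y = b + x - a}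

/-- Proximal normal cone `N^P_C(x) = cone (P_C⁻¹ x - x)`. -/
def proxNormalCone (C : Set X) (x : X) : Set X :=
  {u | ∃ t : ℝ, 0 ≤ t ∧ ∃ z : X, x ∈ projSet C z ∧ u = t • (z - x)}

/-- Mordukhovich (limiting) normal cone. -/
def limNormalCone (C : Set X) (w : X) : Set X :=
  {u | ∃ xs us : ℕ → X, (∀ n, xs n ∈ C) ∧ (∀ n, us n ∈ proxNormalCone C (xs n)) ∧
      Tendsto xs atTop (𝓝 w) ∧ Tendsto us atTop (𝓝 u)}

/-- `(ε,δ)`-regularity of `C` at `w`. -/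
def regAt (C : Set X) (w : X) (ε δ : ℝ) : Prop :=
  ∀ x ∈ C ∩ closedBall w δ, ∀ z ∈ C ∩ closedBall w δ, ∀ u ∈ proxNormalCone C x,
    (inner ℝ u (z - x) : ℝ) ≤ ε * ‖u‖ * ‖z - x‖

/-- Superregularity of `C` at `w`. -/
def superregAt (C : Set X) (w : X) : Prop := ∀ ε > 0, ∃ δ > 0, regAt C w ε δ

/-- The quantity `θ̄(N₁,N₂) = sup {⟨u,v⟩ : u ∈ N₁ ∩ 𝔹, v ∈ (-N₂) ∩ 𝔹}`. -/
noncomputable def thetaBar (N₁ N₂ : Set X) : ℝ :=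
  sSup {r : ℝ | ∃ u ∈ N₁, ∃ v ∈ -N₂, ‖u‖ ≤ 1 ∧ ‖v‖ ≤ 1 ∧ r = (inner ℝ u v : ℝ)}

/-! If `a ∈ P_C x` and `C` is `(ε, r)`-regular at `w`, the reflected point `2a - x` is at most
`1 + 2ε` times as far from any nearby `z ∈ C` as `x` is: `‖2a - x - z‖² = ‖x - z‖² + 4⟪x - a, z - a⟫`,
and regularity bounds the inner product by `ε ‖x - a‖ ‖z - a‖ ≤ ε (1 + ε) ‖x - z‖²`. Applied to `A` at
`x` and then to `B` at `2a - x` (which stays within `3δ/2` of `w` because `ε₁ < 1/4`), this gives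
`‖R_B R_A x - x̄‖ ≤ (1 + 2ε₁)(1 + 2ε₂)‖x - x̄‖`; as `x₊` is the midpoint of `x` and `R_B R_A x`, the
parallelogram law turns this into the claim. -/

section

variable {E : Type*} [NormedAddCommGroup E]

lemma norm_sub_le_two_mul_of_mem_projSet {C : Set E} {x a c : E} (ha : a ∈ projSet C x)
    (hc : c ∈ C) : ‖a - c‖ ≤ 2 * ‖x - c‖ :=
  calc ‖a - c‖ ≤ ‖a - x‖ + ‖x - c‖ := norm_sub_le_norm_sub_add_norm_sub _ _ _
    _ = ‖x - a‖ + ‖x - c‖ := by rw [norm_sub_rev]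
    _ ≤ 2 * ‖x - c‖ := by linarith [ha.2 c hc]

variable [InnerProductSpace ℝ E]

lemma sub_mem_proxNormalCone {C : Set E} {x a : E} (ha : a ∈ projSet C x) :
    x - a ∈ proxNormalCone C a :=
  ⟨1, zero_le_one, x, ha, (one_smul ℝ _).symm⟩

lemma norm_sub_sq_add_norm_sub_sq_eq (x p c : E) :
    ‖x - p‖ ^ 2 + ‖p - c‖ ^ 2 = (‖x - c‖ ^ 2 + ‖(2 : ℝ) • p - x - c‖ ^ 2) / 2 := by
  have h := parallelogram_law_with_norm ℝ (x - p) (p - c)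
  rw [show x - p + (p - c) = x - c by abel, show x - p - (p - c) = -((2 : ℝ) • p - x - c) by module,
    norm_neg] at h
  linarith

section ProjectionEstimates

variable {x a z : E} {ε : ℝ}

lemma norm_sub_le_one_add_mul_of_inner_le (hε₀ : 0 ≤ ε) (hε₁ : ε ≤ 1)
    (hnear : ‖x - a‖ ≤ ‖x - z‖) (hinner : inner ℝ (x - a) (z - a) ≤ ε * ‖x - a‖ * ‖z - a‖) :
    ‖z - a‖ ≤ (1 + ε) * ‖x - z‖ := by
  have hcos : ‖x - z‖ ^ 2 = ‖x - a‖ ^ 2 - 2 * inner ℝ (x - a) (z - a) + ‖z - a‖ ^ 2 := by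
    rw [← norm_sub_sq_real, sub_sub_sub_cancel_right]
  have hsq : (‖z - a‖ - ε * ‖x - a‖) ^ 2 ≤ ‖x - z‖ ^ 2 := by
    nlinarith [mul_nonneg (sub_nonneg.2 (mul_le_one₀ hε₁ hε₀ hε₁)) (sq_nonneg ‖x - a‖)]
  have hle := abs_le_of_sq_le_sq' hsq (norm_nonneg _)
  nlinarith [mul_le_mul_of_nonneg_left hnear hε₀]

lemma norm_two_smul_sub_sub_le_of_inner_le (hε₀ : 0 ≤ ε) (hε₁ : ε ≤ 1)
    (hnear : ‖x - a‖ ≤ ‖x - z‖) (hinner : inner ℝ (x - a) (z - a) ≤ ε * ‖x - a‖ * ‖z - a‖) :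
    ‖(2 : ℝ) • a - x - z‖ ≤ (1 + 2 * ε) * ‖x - z‖ := by
  have hcos : ‖x - z‖ ^ 2 = ‖x - a‖ ^ 2 - 2 * inner ℝ (x - a) (z - a) + ‖z - a‖ ^ 2 := by
    rw [← norm_sub_sq_real, sub_sub_sub_cancel_right]
  have hrefl :
      ‖(2 : ℝ) • a - x - z‖ ^ 2 = ‖x - a‖ ^ 2 + 2 * inner ℝ (x - a) (z - a) + ‖z - a‖ ^ 2 := by
    rw [← norm_add_sq_real, ← norm_neg]
    congr 2
    module
  have hfar := norm_sub_le_one_add_mul_of_inner_le hε₀ hε₁ hnear hinner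
  have hprod : ε * (‖x - a‖ * ‖z - a‖) ≤ ε * (‖x - z‖ * ((1 + ε) * ‖x - z‖)) :=
    mul_le_mul_of_nonneg_left (mul_le_mul hnear hfar (norm_nonneg _) (norm_nonneg _)) hε₀
  refine (pow_le_pow_iff_left₀ (norm_nonneg _) (by positivity) two_ne_zero).1 ?_
  nlinarith

end ProjectionEstimates

lemma regAt.norm_two_smul_sub_sub_le {C : Set E} {w x a z : E} {ε r : ℝ}
    (hreg : regAt C w ε r) (hε₀ : 0 ≤ ε) (hε₁ : ε ≤ 1) (hw : w ∈ C) (hx : ‖x - w‖ ≤ r / 2)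
    (ha : a ∈ projSet C x) (hz : z ∈ C) (hzw : ‖z - w‖ ≤ r) :
    ‖(2 : ℝ) • a - x - z‖ ≤ (1 + 2 * ε) * ‖x - z‖ := by
  have haw : ‖a - w‖ ≤ r := by linarith [norm_sub_le_two_mul_of_mem_projSet ha hw]
  refine norm_two_smul_sub_sub_le_of_inner_le hε₀ hε₁ (ha.2 z hz) ?_
  exact hreg a ⟨ha.1, mem_closedBall_iff_norm.2 haw⟩ z ⟨hz, mem_closedBall_iff_norm.2 hzw⟩ _
    (sub_mem_proxNormalCone ha)

end

theorem DR_quasi_firmly_nonexpansive_general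
    (A B : Set X)
    (w : X) (hw : w ∈ A ∩ B)
    (δ ε₁ ε₂ : ℝ)
    (hε₁ : ε₁ ∈ Set.Ico (0:ℝ) (1 / 4)) (hε₂ : ε₂ ∈ Set.Ico (0:ℝ) (1 / 4))
    (hregA : regAt A w ε₁ (2 * δ)) (hregB : regAt B w ε₂ (3 * δ))
    (x : X) (hx : x ∈ closedBall w δ) (xplus : X) (hxplus : xplus ∈ DRop A B x)
    (xbar : X) (hxbar : xbar ∈ projSet (A ∩ B) x) :
    ‖x - xplus‖ ^ 2 + ‖xplus - xbar‖ ^ 2 ≤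
      (1 + (1 + 2 * ε₁) ^ 2 * (1 + 2 * ε₂) ^ 2) / 2 * ‖x - xbar‖ ^ 2 := by
  obtain ⟨hε₁₀, hε₁₁⟩ := hε₁
  obtain ⟨hε₂₀, hε₂₁⟩ := hε₂
  obtain ⟨a, ha, b, hb, rfl⟩ := hxplus
  have hxw : ‖x - w‖ ≤ δ := mem_closedBall_iff_norm.1 hx
  have hxbar_w : ‖xbar - w‖ ≤ 2 * δ := by
    linarith [norm_sub_le_two_mul_of_mem_projSet hxbar hw]
  have hyw : ‖(2 : ℝ) • a - x - w‖ ≤ 3 * δ / 2 := by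
    have := hregA.norm_two_smul_sub_sub_le hε₁₀ (by linarith) hw.1 (by linarith) ha hw.1
      (by rw [sub_self, norm_zero]; linarith [norm_nonneg (x - w)])
    nlinarith [norm_nonneg (x - w)]
  have hy := hregA.norm_two_smul_sub_sub_le hε₁₀ (by linarith) hw.1 (by linarith) ha
    hxbar.1.1 hxbar_w
  have hR := hregB.norm_two_smul_sub_sub_le hε₂₀ (by linarith) hw.2 hyw hb hxbar.1.2
    (by linarith [norm_nonneg (x - w)])
  have hRBRA : ‖(2 : ℝ) • (b + x - a) - x - xbar‖ ≤ (1 + 2 * ε₁) * (1 + 2 * ε₂) * ‖x - xbar‖ := by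
    rw [show (2 : ℝ) • (b + x - a) - x - xbar = (2 : ℝ) • b - ((2 : ℝ) • a - x) - xbar by module]
    calc _ ≤ (1 + 2 * ε₂) * ‖(2 : ℝ) • a - x - xbar‖ := hR
      _ ≤ (1 + 2 * ε₂) * ((1 + 2 * ε₁) * ‖x - xbar‖) := by gcongr
      _ = _ := by ring
  rw [norm_sub_sq_add_norm_sub_sq_eq]
  nlinarith [pow_le_pow_left₀ (norm_nonneg _) hRBRA 2]

theorem DR_quasi_firmly_nonexpansive
    (A B : Set X) (hA : IsClosed A) (hB : IsClosed B)
    (w : X) (hw : w ∈ A ∩ B)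
    (δ ε₁ ε₂ : ℝ) (hδ : 0 < δ)
    (hε₁ : ε₁ ∈ Set.Ico (0:ℝ) (1 / 4)) (hε₂ : ε₂ ∈ Set.Ico (0:ℝ) (1 / 4))
    (hregA : regAt A w ε₁ (2 * δ)) (hregB : regAt B w ε₂ (3 * δ))
    (x : X) (hx : x ∈ closedBall w δ) (xplus : X) (hxplus : xplus ∈ DRop A B x)
    (xbar : X) (hxbar : xbar ∈ projSet (A ∩ B) x) :
    ‖x - xplus‖ ^ 2 + ‖xplus - xbar‖ ^ 2 ≤
      (1 + (1 + 2 * ε₁) ^ 2 * (1 + 2 * ε₂) ^ 2) / 2 * ‖x - xbar‖ ^ 2 :=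
  DR_quasi_firmly_nonexpansive_general A B w hw δ ε₁ ε₂ hε₁ hε₂ hregA hregB x hx xplus hxplus xbar
    hxbar
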